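/- Let a,b,c,d,z be real numbers with |a|, |b|, |c|, |d| < 1 and z²·|ac| < 1, and set q = abcd. Then for every integer N ≥ 0 the series Φ_N(a,b,c,d;z) = Σ_λ ω(λ) z^{ℓ(λ)}, summed over all partitions λ whose parts are all ≤ N, converges absolutely and Φ_N(a,b,c,d;z) = Ψ_N(a,b,c,d;z) / ((z²q;q)_{⌊N/2⌋} · (z²ac;q)_{⌈N/2⌉}). -/

import Mathlib

open scoped BigOperators

/-- A partition: a weakly decreasing sequence of nonnegative integers (0-indexed:
`parts i` is λ_{i+1}) with finitely many nonzero terms. -/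
structure IntPartition where
  parts : ℕ → ℕ
  antitone : Antitone parts
  fin_support : ∃ N, ∀ n, N ≤ n → parts n = 0

namespace IntPartition

/-- Σ_{i≥1} ⌈λ_{2i-1}/2⌉ (odd-indexed rows, 1-based; ceiling). -/
noncomputable def statA (l : IntPartition) : ℕ := ∑ᶠ i : ℕ, (l.parts (2 * i) + 1) / 2
/-- Σ_{i≥1} ⌊λ_{2i-1}/2⌋. -/
noncomputable def statB (l : IntPartition) : ℕ := ∑ᶠ i : ℕ, l.parts (2 * i) / 2
/-- Σ_{i≥1} ⌈λ_{2i}/2⌉. -/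
noncomputable def statC (l : IntPartition) : ℕ := ∑ᶠ i : ℕ, (l.parts (2 * i + 1) + 1) / 2
/-- Σ_{i≥1} ⌊λ_{2i}/2⌋. -/
noncomputable def statD (l : IntPartition) : ℕ := ∑ᶠ i : ℕ, l.parts (2 * i + 1) / 2

/-- ℓ(λ): the number of nonzero parts. -/
noncomputable def length (l : IntPartition) : ℕ := Set.ncard (Function.support l.parts)

/-- |λ|: the sum of all parts. -/
noncomputable def size (l : IntPartition) : ℕ := ∑ᶠ i : ℕ, l.parts i

/-- A partition is strict if its nonzero parts are pairwise distinct. -/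
def Strict (l : IntPartition) : Prop := ∀ i, l.parts (i + 1) ≠ 0 → l.parts (i + 1) < l.parts i

/-- The Andrews–Stanley four-parameter weight ω(λ). -/
noncomputable def weight {R : Type*} [CommRing R] (a b c d : R) (l : IntPartition) : R :=
  a ^ l.statA * b ^ l.statB * c ^ l.statC * d ^ l.statD

/-- O(λ): the number of odd parts. -/
noncomputable def oddParts (l : IntPartition) : ℕ := Set.ncard {i : ℕ | Odd (l.parts i)}

/-- O(λ'): the number of odd parts of the conjugate partition. -/
noncomputable def conjOddParts (l : IntPartition) : ℕ :=
  Set.ncard {j : ℕ | Odd (Set.ncard {i : ℕ | j + 1 ≤ l.parts i})}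

end IntPartition

/-- The q-shifted factorial (x;q)_n. -/
def poch {R : Type*} [CommRing R] (x q : R) (n : ℕ) : R :=
  ∏ k ∈ Finset.range n, (1 - x * q ^ k)

/-- The infinite q-shifted factorial (x;q)_∞ (as an infinite product of reals). -/
noncomputable def pochInf (x q : ℝ) : ℝ := ∏' k : ℕ, (1 - x * q ^ k)

/-- The basic hypergeometric series ₂φ₁(α,β;γ;q,w). -/
noncomputable def phi21 (α β γ q w : ℝ) : ℝ :=
  ∑' n : ℕ, poch α q n * poch β q n / (poch q q n * poch γ q n) * w ^ n

/-- Absolute convergence of the ₂φ₁ series. -/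
def phi21Summable (α β γ q w : ℝ) : Prop :=
  Summable (fun n : ℕ => poch α q n * poch β q n / (poch q q n * poch γ q n) * w ^ n)

/-- The Gaussian binomial coefficient [N choose k]_q. -/
noncomputable def gauss {K : Type*} [Field K] (q : K) (N k : ℕ) : K :=
  poch q q N / (poch q q k * poch q q (N - k))

/-- Ψ_N(a,b,c,d;z): the generating function of strict partitions with parts ≤ N. -/
noncomputable def Psi {R : Type*} [CommRing R] (a b c d z : R) (N : ℕ) : R :=
  ∑ᶠ μ : {μ : IntPartition // μ.Strict ∧ μ.parts 0 ≤ N},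
    IntPartition.weight a b c d μ.1 * z ^ μ.1.length

/-!
A partition with parts `≤ N` is determined by its multiplicity vector `m : Fin N → ℕ`, and writing
`m = ε + 2 p` with `ε ∈ {0, 1}ᴺ` splits it into the strict partition with multiplicities `ε` and
pairs of equal parts. Inserting a pair of equal parts `v` into two consecutive rows fills one
odd-indexed and one even-indexed row and shifts the later rows by two, so it multiplies
`ω(λ) z^ℓ(λ)` by `z² (ac)^⌈v/2⌉ (bd)^⌊v/2⌋`. Hence `Φ_N` is `Ψ_N` times a product of `N` geometric
series, each of ratio at most `z² |ac| < 1` in absolute value; the ratios with `v` odd and `v` even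
make up `(z²ac; q)_⌈N/2⌉` and `(z²q; q)_⌊N/2⌋`.
-/

open Finset

section InsertPair

variable {M : Type*}

def insertPair (s : ℕ → M) (t : ℕ) (v : M) (j : ℕ) : M :=
  if j < t then s j else if j < t + 2 then v else s (j - 2)

lemma comp_insertPair {M' : Type*} (g : M → M') (s : ℕ → M) (t : ℕ) (v : M) :
    g ∘ insertPair s t v = insertPair (g ∘ s) t (g v) := by
  funext j
  simp only [insertPair, Function.comp_apply]
  split_ifs <;> rfl

variable [AddCommMonoid M]

lemma sum_range_succ_insertAt (u : ℕ → M) {i₀ n : ℕ} (h : i₀ ≤ n) (v : M) :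
    ∑ i ∈ range (n + 1), (if i < i₀ then u i else if i = i₀ then v else u (i - 1)) =
      v + ∑ i ∈ range n, u i := by
  induction n, h using Nat.le_induction with
  | base =>
    rw [sum_range_succ, if_neg (lt_irrefl i₀), if_pos rfl, add_comm]
    exact congrArg _ (sum_congr rfl fun i hi => if_pos (mem_range.mp hi))
  | succ n hn ih =>
    rw [sum_range_succ, ih, sum_range_succ, if_neg (by omega), if_neg (by omega),
      Nat.add_sub_cancel, add_assoc]

lemma finsum_insertPair_two_mul_add {s : ℕ → M} {B : ℕ} (hs : ∀ j, B ≤ j → s j = 0)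
    (t : ℕ) (v : M) {r : ℕ} (hr : r ≤ 1) :
    ∑ᶠ i, insertPair s t v (2 * i + r) = v + ∑ᶠ i, s (2 * i + r) := by
  set i₀ := (t + 1 - r) / 2
  have hins : ∀ i, insertPair s t v (2 * i + r) =
      if i < i₀ then s (2 * i + r) else if i = i₀ then v else s (2 * (i - 1) + r) := by
    intro i
    unfold insertPair
    split_ifs <;> first | rfl | omega | (congr 1; omega)
  rw [finsum_eq_sum_of_support_subset (s := range (B + t + 1)), finsum_eq_sum_of_support_subset
    (s := range (B + t)), sum_congr rfl fun i _ => hins i]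
  · exact sum_range_succ_insertAt (fun i => s (2 * i + r)) (by omega) v
  · intro i hi
    by_contra hout
    simp only [coe_range, Set.mem_Iio, not_lt] at hout
    exact hi (hs _ (by omega))
  · intro i hi
    by_contra hout
    simp only [coe_range, Set.mem_Iio, not_lt] at hout
    apply hi
    change insertPair s t v (2 * i + r) = 0
    rw [hins, if_neg (by omega), if_neg (by omega), hs _ (by omega)]

end InsertPair

lemma poch_succ {R : Type*} [CommRing R] (x q : R) (n : ℕ) :
    poch x q (n + 1) = poch x q n * (1 - x * q ^ n) :=
  prod_range_succ _ _

lemma Antitone.le_apply_iff_lt_card_filter {f : ℕ → ℕ} (hf : Antitone f) {B : ℕ}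
    (hB : ∀ n, B ≤ n → f n = 0) {K : ℕ} (hK : 0 < K) (i : ℕ) :
    K ≤ f i ↔ i < #{j ∈ range B | K ≤ f j} := by
  constructor
  · intro h
    have hiB : i < B := by
      by_contra hc
      rw [hB i (by omega)] at h
      omega
    have hsub : range (i + 1) ⊆ {j ∈ range B | K ≤ f j} := fun j hj => by
      rw [mem_range] at hj
      exact mem_filter.mpr ⟨mem_range.mpr (by omega), h.trans (hf (by omega))⟩
    simpa using card_le_card hsub
  · intro h
    by_contra hc
    have hsub : {j ∈ range B | K ≤ f j} ⊆ range i := fun j hj => by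
      rw [mem_filter] at hj
      by_contra hji
      exact hc (hj.2.trans (hf (by simpa using hji)))
    simpa using h.trans_le (card_le_card hsub)

section ProdPi

variable {R : Type*} [NormedCommRing R] {κ : Type*}

lemma prod_consEquiv_apply {n : ℕ} (g : Fin (n + 1) → κ → R) (q : κ × (Fin n → κ)) :
    ∏ k, g k (Fin.consEquiv (fun _ => κ) q k) = g 0 q.1 * ∏ k : Fin n, g k.succ (q.2 k) := by
  simp [Fin.prod_univ_succ, Fin.consEquiv]

lemma summable_norm_prod_pi : ∀ {n : ℕ} {g : Fin n → κ → R},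
    (∀ k, Summable fun j => ‖g k j‖) → Summable fun p : Fin n → κ => ‖∏ k, g k (p k)‖
  | 0, _, _ => Summable.of_finite
  | n + 1, g, hg => by
    rw [← (Fin.consEquiv fun _ => κ).summable_iff]
    simpa only [Function.comp_def, prod_consEquiv_apply] using
      (hg 0).mul_norm (summable_norm_prod_pi fun k => hg k.succ)

lemma tsum_prod_pi [CompleteSpace R] : ∀ {n : ℕ} {g : Fin n → κ → R},
    (∀ k, Summable fun j => ‖g k j‖) → ∑' p : Fin n → κ, ∏ k, g k (p k) = ∏ k, ∑' j, g k j
  | 0, _, _ => by simp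
  | n + 1, g, hg => by
    rw [← (Fin.consEquiv fun _ => κ).tsum_eq]
    simp only [prod_consEquiv_apply]
    rw [← tsum_mul_tsum_of_summable_norm (hg 0) (summable_norm_prod_pi fun k => hg k.succ),
      tsum_prod_pi fun k => hg k.succ, Fin.prod_univ_succ]

end ProdPi

namespace IntPartition

lemma parts_injective : Function.Injective parts := by
  rintro ⟨⟩ ⟨⟩ rfl
  rfl

variable {N : ℕ}

/-- The number of parts `≥ K` of the partition in which each `k + 1` has multiplicity `m k`. -/
def countGE (m : Fin N → ℕ) (K : ℕ) : ℕ := ∑ k : Fin N, if K ≤ (k : ℕ) + 1 then m k else 0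

lemma countGE_antitone (m : Fin N → ℕ) : Antitone (countGE m) := fun _ _ h =>
  sum_le_sum fun _ _ => by split_ifs <;> omega

lemma countGE_eq_zero (m : Fin N → ℕ) {K : ℕ} (hK : N < K) : countGE m K = 0 :=
  sum_eq_zero fun k _ => if_neg (by omega)

lemma countGE_one (m : Fin N → ℕ) : countGE m 1 = ∑ k, m k :=
  sum_congr rfl fun _ _ => if_pos (by omega)

lemma countGE_succ (m : Fin N → ℕ) (k : Fin N) :
    countGE m (k + 1) = countGE m (k + 2) + m k := by
  rw [← Fintype.sum_ite_eq' k m, countGE, countGE, ← sum_add_distrib]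
  refine sum_congr rfl fun j _ => ?_
  have : (j : ℕ) = k ↔ j = k := Fin.val_inj
  split_ifs <;> omega

lemma countGE_add_two_nsmul_single (m : Fin N → ℕ) (k : Fin N) (K : ℕ) :
    countGE (m + 2 • Pi.single k 1) K = countGE m K + if K ≤ (k : ℕ) + 1 then 2 else 0 := by
  rw [← Fintype.sum_ite_eq' k (fun _ => if K ≤ (k : ℕ) + 1 then 2 else 0), countGE, countGE,
    ← sum_add_distrib]
  refine sum_congr rfl fun j _ => ?_
  by_cases hj : j = k
  · subst hj
    split_ifs <;> simp_all
  · simp [hj]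

/-- The `i`-th part (counting from `0`) is the largest `K` with more than `i` parts `≥ K`. -/
def partOfMult (m : Fin N → ℕ) (i : ℕ) : ℕ := Nat.findGreatest (fun K => i < countGE m K) N

lemma le_partOfMult_iff (m : Fin N → ℕ) {K : ℕ} (hK : 0 < K) (i : ℕ) :
    K ≤ partOfMult m i ↔ i < countGE m K := by
  constructor
  · intro h
    have h0 : partOfMult m i ≠ 0 := by omega
    have hi : i < countGE m (partOfMult m i) :=
      Nat.findGreatest_of_ne_zero (P := fun K => i < countGE m K) rfl h0
    exact hi.trans_le (countGE_antitone m h)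
  · intro h
    refine Nat.le_findGreatest ?_ h
    by_contra hKN
    rw [countGE_eq_zero m (by omega)] at h
    omega

lemma partOfMult_le (m : Fin N → ℕ) (i : ℕ) : partOfMult m i ≤ N := Nat.findGreatest_le N

lemma partOfMult_antitone (m : Fin N → ℕ) : Antitone (partOfMult m) := fun _ _ h =>
  Nat.findGreatest_mono_left (fun _ hK => lt_of_le_of_lt h hK) N

lemma partOfMult_eq_zero (m : Fin N → ℕ) {i : ℕ} (hi : ∑ k, m k ≤ i) : partOfMult m i = 0 := by
  by_contra h
  have := (le_partOfMult_iff m one_pos i).mp (by omega)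
  rw [countGE_one] at this
  omega

lemma partOfMult_eq_succ_iff (m : Fin N → ℕ) (k i : ℕ) :
    partOfMult m i = k + 1 ↔ countGE m (k + 2) ≤ i ∧ i < countGE m (k + 1) := by
  have h₁ := le_partOfMult_iff m (K := k + 1) (by omega) i
  have h₂ := le_partOfMult_iff m (K := k + 2) (by omega) i
  omega

def ofMult (m : Fin N → ℕ) : IntPartition where
  parts := partOfMult m
  antitone := partOfMult_antitone m
  fin_support := ⟨∑ k, m k, fun _ hn => partOfMult_eq_zero m hn⟩

lemma length_ofMult (m : Fin N → ℕ) : (ofMult m).length = ∑ k, m k := by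
  have : Function.support (ofMult m).parts = ↑(range (∑ k, m k)) := by
    ext i
    have := le_partOfMult_iff m one_pos i
    rw [countGE_one] at this
    simp only [Function.mem_support, coe_range, Set.mem_Iio]
    exact Nat.pos_iff_ne_zero.symm.trans this
  rw [length, this, Set.ncard_coe_finset, card_range]

lemma countGE_eq_of_partOfMult_eq {m m' : Fin N → ℕ} (h : partOfMult m = partOfMult m')
    {K : ℕ} (hK : 0 < K) : countGE m K = countGE m' K :=
  eq_of_forall_lt_iff fun i => by
    rw [← le_partOfMult_iff m hK, ← le_partOfMult_iff m' hK, h]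

lemma ofMult_injective : Function.Injective (ofMult (N := N)) := by
  intro m m' h
  have hc := fun K (hK : 0 < K) => countGE_eq_of_partOfMult_eq (congrArg parts h) hK
  funext k
  have := countGE_succ m k
  have := countGE_succ m' k
  have := hc (k + 1) (by omega)
  have := hc (k + 2) (by omega)
  omega

lemma exists_countGE_eq {c : ℕ → ℕ} (hc : Antitone c) (hN : c (N + 1) = 0) :
    ∃ m : Fin N → ℕ, ∀ K, 0 < K → countGE m K = c K := by
  refine ⟨fun k => c (k + 1) - c (k + 2), fun K hK => ?_⟩
  obtain hKN | hKN := le_or_gt K (N + 1)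
  swap
  · rw [countGE_eq_zero _ (by omega)]
    exact (Nat.le_zero.mp (hN ▸ hc hKN.le)).symm
  induction hKN using Nat.decreasingInduction with
  | self => rw [countGE_eq_zero _ (Nat.lt_succ_self N), hN]
  | of_succ K hKN ih =>
    have hsucc := countGE_succ (fun k : Fin N => c (k + 1) - c (k + 2)) ⟨K - 1, by omega⟩
    have : c (K + 1) ≤ c K := hc (by omega)
    simp only [show K - 1 + 1 = K by omega, show K - 1 + 2 = K + 1 by omega] at hsucc
    rw [ih (by omega)] at hsucc
    omega

lemma exists_ofMult_eq {l : IntPartition} (hl : l.parts 0 ≤ N) : ∃ m : Fin N → ℕ, ofMult m = l := by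
  obtain ⟨B, hB⟩ := l.fin_support
  obtain ⟨m, hm⟩ := exists_countGE_eq (N := N) (c := fun K => #{j ∈ range B | K ≤ l.parts j})
    (fun K K' h => card_le_card fun j hj => by
      simp only [mem_filter] at hj ⊢
      exact ⟨hj.1, h.trans hj.2⟩)
    (card_eq_zero.mpr (filter_eq_empty_iff.mpr fun j _ => by
      have := l.antitone (Nat.zero_le j)
      omega))
  refine ⟨m, parts_injective (funext fun i => eq_of_forall_le_iff fun K => ?_)⟩
  rcases K.eq_zero_or_pos with rfl | hK
  · simp
  · rw [ofMult, le_partOfMult_iff m hK, hm K hK, ← l.antitone.le_apply_iff_lt_card_filter hB hK]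

lemma parts_ofMult_add_two_nsmul_single (m : Fin N → ℕ) (k : Fin N) :
    (ofMult (m + 2 • Pi.single k 1)).parts =
      insertPair (ofMult m).parts (countGE m (k + 2)) (k + 1) := by
  change partOfMult _ = insertPair (partOfMult m) _ _
  funext i
  refine eq_of_forall_le_iff fun K => ?_
  rcases K.eq_zero_or_pos with rfl | hK
  · simp
  have hcmp : K ≤ k + 1 ∧ countGE m (k + 2) ≤ countGE m K ∨
      k + 1 < K ∧ countGE m K ≤ countGE m (k + 2) := by
    rcases le_or_gt K (k + 1) with h | h
    exacts [.inl ⟨h, countGE_antitone m (by omega)⟩, .inr ⟨h, countGE_antitone m (by omega)⟩]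
  rw [le_partOfMult_iff _ hK, countGE_add_two_nsmul_single]
  unfold insertPair
  split_ifs <;> (try rw [le_partOfMult_iff m hK]) <;> omega

lemma finsum_parts_two_mul_add_of_insertPair {l l' : IntPartition} {t v : ℕ}
    (h : l'.parts = insertPair l.parts t v) {g : ℕ → ℕ} (hg : g 0 = 0) {r : ℕ} (hr : r ≤ 1) :
    ∑ᶠ i, g (l'.parts (2 * i + r)) = g v + ∑ᶠ i, g (l.parts (2 * i + r)) := by
  obtain ⟨B, hB⟩ := l.fin_support
  have := finsum_insertPair_two_mul_add (s := g ∘ l.parts) (B := B)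
    (fun j hj => by simp [hB j hj, hg]) t (g v) hr
  rwa [← comp_insertPair, ← h] at this

section Weight

variable {R : Type*} [CommRing R] (a b c d z : R)

lemma weight_of_parts_eq_insertPair {l l' : IntPartition} {t v : ℕ}
    (h : l'.parts = insertPair l.parts t v) :
    weight a b c d l' = (a * c) ^ ((v + 1) / 2) * (b * d) ^ (v / 2) * weight a b c d l := by
  have hA : l'.statA = (v + 1) / 2 + l.statA := by
    simpa [statA] using finsum_parts_two_mul_add_of_insertPair h (g := fun n => (n + 1) / 2) rfl
      zero_le_one
  have hB : l'.statB = v / 2 + l.statB := by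
    simpa [statB] using finsum_parts_two_mul_add_of_insertPair h (g := fun n => n / 2) rfl
      zero_le_one
  have hC : l'.statC = (v + 1) / 2 + l.statC :=
    finsum_parts_two_mul_add_of_insertPair h (g := fun n => (n + 1) / 2) rfl le_rfl
  have hD : l'.statD = v / 2 + l.statD :=
    finsum_parts_two_mul_add_of_insertPair h (g := fun n => n / 2) rfl le_rfl
  simp only [weight, hA, hB, hC, hD, pow_add, mul_pow]
  ring

def pairFactor (v : ℕ) : R := z ^ 2 * ((a * c) ^ ((v + 1) / 2) * (b * d) ^ (v / 2))

noncomputable def multWeight (m : Fin N → ℕ) : R :=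
  weight a b c d (ofMult m) * z ^ (ofMult m).length

lemma multWeight_add_two_nsmul_single (m : Fin N → ℕ) (k : Fin N) :
    multWeight a b c d z (m + 2 • Pi.single k 1) =
      pairFactor a b c d z (k + 1) * multWeight a b c d z m := by
  rw [multWeight, multWeight,
    weight_of_parts_eq_insertPair a b c d (parts_ofMult_add_two_nsmul_single m k),
    length_ofMult, length_ofMult]
  have hsum : ∑ j, (m + 2 • Pi.single k 1 : Fin N → ℕ) j = ∑ j, m j + 2 := by
    simp [sum_add_distrib, ← mul_sum]
  rw [hsum, pairFactor, pow_add]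
  ring

lemma multWeight_add_two_nsmul_pi_single (m : Fin N → ℕ) (k : Fin N) (n : ℕ) :
    multWeight a b c d z (m + 2 • Pi.single k n) =
      pairFactor a b c d z (k + 1) ^ n * multWeight a b c d z m := by
  induction n with
  | zero => simp
  | succ n ih =>
    rw [Pi.single_add (f := fun _ => ℕ) k n 1, smul_add, ← add_assoc,
      multWeight_add_two_nsmul_single, ih, pow_succ]
    ring

lemma multWeight_add_two_nsmul (m p : Fin N → ℕ) :
    multWeight a b c d z (m + 2 • p) =
      multWeight a b c d z m * ∏ k : Fin N, pairFactor a b c d z (k + 1) ^ p k := by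
  suffices ∀ s : Finset (Fin N), multWeight a b c d z (m + 2 • ∑ k ∈ s, Pi.single k (p k)) =
      multWeight a b c d z m * ∏ k ∈ s, pairFactor a b c d z ((k : ℕ) + 1) ^ p k by
    simpa only [univ_sum_single] using this univ
  intro s
  induction s using Finset.induction_on with
  | empty => simp
  | insert j s hj ih =>
    rw [sum_insert hj, prod_insert hj, show m + 2 • (Pi.single j (p j) + ∑ k ∈ s, Pi.single k (p k))
      = (m + 2 • ∑ k ∈ s, Pi.single k (p k)) + 2 • Pi.single j (p j) by abel,
      multWeight_add_two_nsmul_pi_single, ih]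
    ring

lemma pairFactor_two_mul_add_one (t : ℕ) :
    pairFactor a b c d z (2 * t + 1) = z ^ 2 * a * c * (a * b * c * d) ^ t := by
  rw [pairFactor, show (2 * t + 1 + 1) / 2 = t + 1 by omega, show (2 * t + 1) / 2 = t by omega]
  ring

lemma pairFactor_two_mul_add_two (t : ℕ) :
    pairFactor a b c d z (2 * t + 2) = z ^ 2 * (a * b * c * d) * (a * b * c * d) ^ t := by
  rw [pairFactor, show (2 * t + 2 + 1) / 2 = t + 1 by omega, show (2 * t + 2) / 2 = t + 1 by omega]
  ring

lemma prod_one_sub_pairFactor (N : ℕ) :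
    ∏ k : Fin N, (1 - pairFactor a b c d z (k + 1)) =
      poch (z ^ 2 * (a * b * c * d)) (a * b * c * d) (N / 2) *
        poch (z ^ 2 * a * c) (a * b * c * d) ((N + 1) / 2) := by
  rw [Fin.prod_univ_eq_prod_range (fun k => 1 - pairFactor a b c d z (k + 1))]
  induction N with
  | zero => simp [poch]
  | succ n ih =>
    rw [prod_range_succ, ih]
    obtain ⟨t, rfl | rfl⟩ := Nat.even_or_odd' n
    · rw [show (2 * t + 1) / 2 = t by omega, show 2 * t / 2 = t by omega,
        show (2 * t + 1 + 1) / 2 = t + 1 by omega, pairFactor_two_mul_add_one, poch_succ]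
      ring
    · rw [show (2 * t + 1 + 1) / 2 = t + 1 by omega, show (2 * t + 1) / 2 = t by omega,
        show (2 * t + 1 + 1 + 1) / 2 = t + 1 by omega, show 2 * t + 1 + 1 = 2 * t + 2 by omega,
        pairFactor_two_mul_add_two, poch_succ (z ^ 2 * (a * b * c * d))]
      ring

end Weight

lemma abs_pairFactor_lt_one {a b c d z : ℝ} (hac : |a * c| ≤ 1) (hbd : |b * d| ≤ 1)
    (hz : z ^ 2 * |a * c| < 1) {v : ℕ} (hv : 0 < v) : |pairFactor a b c d z v| < 1 := by
  rw [pairFactor, abs_mul, abs_mul, abs_pow, abs_pow, abs_pow, sq_abs]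
  calc z ^ 2 * (|a * c| ^ ((v + 1) / 2) * |b * d| ^ (v / 2)) ≤ z ^ 2 * (|a * c| * 1) := by
        gcongr
        · exact pow_le_of_le_one (abs_nonneg _) hac (by omega)
        · exact pow_le_one₀ (abs_nonneg _) hbd
    _ < 1 := by simpa using hz

lemma strict_ofMult_iff (m : Fin N → ℕ) : (ofMult m).Strict ↔ ∀ k, m k ≤ 1 := by
  change (∀ i, partOfMult m (i + 1) ≠ 0 → partOfMult m (i + 1) < partOfMult m i) ↔ _
  constructor
  · intro hs k
    by_contra! hk
    have hsucc := countGE_succ m k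
    set i := countGE m (k + 2)
    have h₀ := (partOfMult_eq_succ_iff m k i).mpr ⟨le_rfl, by omega⟩
    have h₁ := (partOfMult_eq_succ_iff m k (i + 1)).mpr ⟨by omega, by omega⟩
    have := hs i (by omega)
    omega
  · intro hm i hi
    obtain ⟨k, hk⟩ : ∃ k : Fin N, partOfMult m (i + 1) = k + 1 :=
      ⟨⟨partOfMult m (i + 1) - 1, by have := partOfMult_le m (i + 1); omega⟩, by dsimp only; omega⟩
    have := (partOfMult_eq_succ_iff m k (i + 1)).mp hk
    have := countGE_succ m k
    have := hm k
    have := (le_partOfMult_iff m (K := k + 2) (by omega) i).mpr (by omega)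
    omega

noncomputable def multEquiv (N : ℕ) : (Fin N → ℕ) ≃ {l : IntPartition // l.parts 0 ≤ N} :=
  Equiv.ofBijective (fun m => ⟨ofMult m, partOfMult_le m 0⟩)
    ⟨fun _ _ h => ofMult_injective (congrArg Subtype.val h),
      fun l => (exists_ofMult_eq l.2).imp fun _ hm => Subtype.ext hm⟩

noncomputable def strictMultEquiv (N : ℕ) :
    (Fin N → Fin 2) ≃ {μ : IntPartition // μ.Strict ∧ μ.parts 0 ≤ N} :=
  Equiv.ofBijective
    (fun ε => ⟨ofMult (fun k => ε k), (strict_ofMult_iff _).mpr fun k => Nat.le_of_lt_succ (ε k).2,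
      partOfMult_le _ 0⟩)
    ⟨fun _ _ h => funext fun k => Fin.ext (congrFun (ofMult_injective (congrArg Subtype.val h)) k),
      fun μ => by
        obtain ⟨m, hm⟩ := exists_ofMult_eq μ.2.2
        have hm₁ := (strict_ofMult_iff m).mp (hm ▸ μ.2.1)
        exact ⟨fun k => ⟨m k, Nat.lt_succ_of_le (hm₁ k)⟩, Subtype.ext hm⟩⟩

lemma psi_eq_sum_multWeight {R : Type*} [CommRing R] (a b c d z : R) (N : ℕ) :
    Psi a b c d z N = ∑ ε : Fin N → Fin 2, multWeight a b c d z (fun k => ε k) := by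
  rw [Psi, ← finsum_comp_equiv (strictMultEquiv N), finsum_eq_sum_of_fintype]
  rfl

def piDivModTwoEquiv (N : ℕ) : (Fin N → ℕ) ≃ (Fin N → ℕ) × (Fin N → Fin 2) :=
  (Equiv.piCongrRight fun _ => Nat.divModEquiv 2).trans (Equiv.arrowProdEquivProdArrow _ _ _)

lemma multWeight_piDivModTwoEquiv_symm {R : Type*} [CommRing R] (a b c d z : R)
    (q : (Fin N → ℕ) × (Fin N → Fin 2)) :
    multWeight a b c d z ((piDivModTwoEquiv N).symm q) =
      (∏ k : Fin N, pairFactor a b c d z (k + 1) ^ q.1 k) *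
        multWeight a b c d z (fun k => q.2 k) := by
  rw [mul_comm, ← multWeight_add_two_nsmul]
  congr 1
  funext k
  change q.1 k * 2 + (q.2 k : ℕ) = q.2 k + 2 * q.1 k
  ring

variable {K : Type*} [NormedField K] (a b c d z : K)

theorem summable_norm_multWeight (hx : ∀ k : Fin N, ‖pairFactor a b c d z (k + 1)‖ < 1) :
    Summable fun m : Fin N → ℕ => ‖multWeight a b c d z m‖ := by
  rw [← (piDivModTwoEquiv N).symm.summable_iff]
  simpa only [Function.comp_def, multWeight_piDivModTwoEquiv_symm] using
    (summable_norm_prod_pi fun k => summable_norm_geometric_of_norm_lt_one (hx k)).mul_norm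
      (Summable.of_finite (f := fun ε : Fin N → Fin 2 => ‖multWeight a b c d z fun k => ε k‖))

theorem tsum_multWeight [CompleteSpace K]
    (hx : ∀ k : Fin N, ‖pairFactor a b c d z (k + 1)‖ < 1) :
    ∑' m : Fin N → ℕ, multWeight a b c d z m =
      Psi a b c d z N / ∏ k : Fin N, (1 - pairFactor a b c d z (k + 1)) := by
  have hgeo := fun k => summable_norm_geometric_of_norm_lt_one (hx k)
  rw [← (piDivModTwoEquiv N).symm.tsum_eq, tsum_congr (multWeight_piDivModTwoEquiv_symm a b c d z),
    ← tsum_mul_tsum_of_summable_norm (summable_norm_prod_pi hgeo)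
      (Summable.of_finite (f := fun ε : Fin N → Fin 2 => ‖multWeight a b c d z fun k => ε k‖)),
    tsum_prod_pi hgeo, tsum_fintype, ← psi_eq_sum_multWeight, div_eq_inv_mul, ← prod_inv_distrib]
  congr 1
  exact prod_congr rfl fun k _ => tsum_geometric_of_norm_lt_one (hx k)

end IntPartition

open IntPartition

theorem phi_eq_psi_div (a b c d z q : ℝ)
    (ha : |a| < 1) (hb : |b| < 1) (hc : |c| < 1) (hd : |d| < 1)
    (hz : z ^ 2 * |a * c| < 1) (hq : q = a * b * c * d) (N : ℕ) :
    Summable (fun l : {l : IntPartition // l.parts 0 ≤ N} =>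
      |IntPartition.weight a b c d l.1 * z ^ l.1.length|) ∧
    ∑' l : {l : IntPartition // l.parts 0 ≤ N},
        IntPartition.weight a b c d l.1 * z ^ l.1.length =
      Psi a b c d z N /
        (poch (z ^ 2 * q) q (N / 2) * poch (z ^ 2 * a * c) q ((N + 1) / 2)) := by
  subst hq
  have habs : ∀ {x y : ℝ}, |x| < 1 → |y| < 1 → |x * y| ≤ 1 := fun hx hy => by
    rw [abs_mul]
    exact mul_le_one₀ hx.le (abs_nonneg _) hy.le
  have hx : ∀ k : Fin N, ‖pairFactor a b c d z (k + 1)‖ < 1 := fun k =>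
    abs_pairFactor_lt_one (habs ha hc) (habs hb hd) hz k.succ_pos
  refine ⟨(multEquiv N).summable_iff.mp (summable_norm_multWeight a b c d z hx), ?_⟩
  rw [← (multEquiv N).tsum_eq, ← prod_one_sub_pairFactor]
  exact tsum_multWeight a b c d z hx
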